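/- Let 1 ≤ r < 2 and let 2 < s < r′, where r′ = r/(r−1) is the conjugate exponent of r. There is a constant C = C(r,s) such that for every compactly supported m : ℝ → ℂ with ‖m‖_{V^r} ≤ 1, every Schwartz function f : ℝ → ℂ, and every x ∈ ℝ: |(m·f̂)ˇ(x)| ≤ C · sup_𝓘 (Σ_{I ∈ 𝓘} |(1_I·f̂)ˇ(x)|^s)^{1/s}, where the supremum is over all collections 𝓘 of pairwise disjoint subintervals of ℝ. -/

import Mathlib

open MeasureTheory Real Set Filter
open scoped ENNReal NNReal FourierTransform

/-- The `r`-variation norm `‖m‖_{V^r} = ‖m‖_{L^∞} +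
sup_{N, ξ₀ < ⋯ < ξ_N} (∑_{i=1}^N |m(ξ_i) − m(ξ_{i−1})|^r)^{1/r}`,
the supremum being over all strictly increasing finite sequences of reals. -/
noncomputable def variationNorm (r : ℝ) (m : ℝ → ℂ) : ℝ≥0∞ :=
  (⨆ ξ : ℝ, (‖m ξ‖₊ : ℝ≥0∞)) +
    ⨆ (N : ℕ) (ξ : Fin (N + 1) → ℝ) (_ : StrictMono ξ),
      (∑ i : Fin N, (‖m (ξ i.succ) - m (ξ i.castSucc)‖₊ : ℝ≥0∞) ^ r) ^ (1 / r)

/-- Application of the Fourier multiplier `m` to `f`, i.e. `(m·f̂)ˇ`. -/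
noncomputable def applyMultiplier (m f : ℝ → ℂ) : ℝ → ℂ :=
  𝓕⁻ (fun ξ => m ξ * 𝓕 f ξ)

/-- The Rubio de Francia type maximal `s`-square function
`sup_𝓘 (∑_{I ∈ 𝓘} |(1_I·f̂)ˇ(x)|^s)^{1/s}`, the supremum being over all collections
`𝓘` of pairwise disjoint subintervals of `ℝ`. -/
noncomputable def maximalSquareFunction (s : ℝ) (f : ℝ → ℂ) (x : ℝ) : ℝ≥0∞ :=
  ⨆ (𝓘 : Finset (Set ℝ)) (_ : ∀ I ∈ 𝓘, I.OrdConnected)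
      (_ : ((𝓘 : Set (Set ℝ))).PairwiseDisjoint id),
    (∑ I ∈ 𝓘, (‖applyMultiplier (I.indicator 1) f x‖₊ : ℝ≥0∞) ^ s) ^ (1 / s)

/-!
Put `g(ξ) = e(ξx) f̂(ξ)` and `F(u) = ∫_{ξ < u} g`. Then `(m·f̂)ˇ(x) = ∫ m g` is the
Riemann–Stieltjes integral `∫ m dF`, and every increment `F(b) - F(a)` equals
`(1_{[a,b)}·f̂)ˇ(x)`, so the maximal square function `W` bounds the `s`-variation of `F`,
while `m` has `r`-variation at most `1`.

Because `1/r + 1/s > 1`, the Love–Young inequality bounds every Riemann–Stieltjes sum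
`∑ₖ m(tₖ)(F(tₖ₊₁) - F(tₖ))` by `ζ(1/r + 1/s)·W`: by Hölder, among `n` interior points of the
partition there is one at which `|Δm|·|ΔF| ≤ W n^{-(1/r + 1/s)}`, and deleting it changes the sum
by exactly that product. Over a uniform partition of mesh `δ` of the support of `m` the sum
differs from `∫ m g` by at most `‖f̂‖_∞ δ ∑ₖ oscₖ m ≤ ‖f̂‖_∞ δ n^{1 - 1/r}`, which tends to `0`.
-/
def PVariationLE {α E : Type*} [Preorder α] [SeminormedAddCommGroup E] (p : ℝ) (f : α → E)
    (C : ℝ) : Prop :=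
  ∀ (N : ℕ) (η : ℕ → α), StrictMono η → ∑ i ∈ Finset.range N, ‖f (η (i + 1)) - f (η i)‖ ^ p ≤ C

theorem Finset.exists_mul_le_div_card_rpow {ι : Type*} {T : Finset ι} (hT : T.Nonempty)
    {x y : ι → ℝ} (hx : ∀ i ∈ T, 0 ≤ x i) (hy : ∀ i ∈ T, 0 ≤ y i) {p q V W : ℝ} (hp : 0 < p)
    (hq : 0 < q) (hV : 0 ≤ V) (hW : 0 ≤ W) (hxV : ∑ i ∈ T, x i ^ p ≤ V ^ p)
    (hyW : ∑ i ∈ T, y i ^ q ≤ W ^ q) :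
    ∃ i ∈ T, x i * y i ≤ V * W / (T.card : ℝ) ^ (1 / p + 1 / q) := by
  set θ := 1 / p + 1 / q
  have hθ : 0 < θ := by positivity
  obtain ⟨i, hi, hmin⟩ := T.exists_min_image (fun i => x i * y i) hT
  refine ⟨i, hi, ?_⟩
  have hxy : 0 ≤ x i * y i := mul_nonneg (hx i hi) (hy i hi)
  have hT0 : (0 : ℝ) < T.card := by exact_mod_cast hT.card_pos
  have hpqθ : p.HolderTriple q θ⁻¹ := ⟨by simp [θ], hp, hq⟩
  have hsum : T.card * (x i * y i) ^ θ⁻¹ ≤ (V * W) ^ θ⁻¹ := calc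
    T.card * (x i * y i) ^ θ⁻¹ ≤ ∑ j ∈ T, (x j * y j) ^ θ⁻¹ := by
      simpa using T.card_nsmul_le_sum _ _ fun j hj =>
        rpow_le_rpow hxy (hmin j hj) (inv_nonneg.2 hθ.le)
    _ ≤ (∑ j ∈ T, x j ^ p) ^ (θ⁻¹ / p) * (∑ j ∈ T, y j ^ q) ^ (θ⁻¹ / q) :=
      Real.Lr_rpow_le_Lp_mul_Lq_of_nonneg T hpqθ hx hy
    _ ≤ (V ^ p) ^ (θ⁻¹ / p) * (W ^ q) ^ (θ⁻¹ / q) := by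
      have hxp : 0 ≤ ∑ j ∈ T, x j ^ p := Finset.sum_nonneg fun j hj => rpow_nonneg (hx j hj) p
      have hyq : 0 ≤ ∑ j ∈ T, y j ^ q := Finset.sum_nonneg fun j hj => rpow_nonneg (hy j hj) q
      gcongr
    _ = (V * W) ^ θ⁻¹ := by
      rw [← rpow_mul hV, ← rpow_mul hW, mul_div_cancel₀ _ hp.ne', mul_div_cancel₀ _ hq.ne',
        mul_rpow hV hW]
  have hθsum := rpow_le_rpow (by positivity) hsum hθ.le
  rwa [mul_rpow hT0.le (by positivity), ← rpow_mul hxy, ← rpow_mul (mul_nonneg hV hW),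
    inv_mul_cancel₀ hθ.ne', rpow_one, rpow_one, ← le_div_iff₀' (by positivity)] at hθsum

theorem Finset.sum_range_succ_eq_sum_add_of_merge {M : Type*} [AddCommMonoid M] {u u' : ℕ → M}
    {k n : ℕ} (hkn : k < n) (c : M) (hlt : ∀ i < k, u' i = u i) (hk : u' k + c = u k + u (k + 1))
    (hgt : ∀ i, k < i → u' i = u (i + 1)) :
    ∑ i ∈ Finset.range (n + 1), u i = ∑ i ∈ Finset.range n, u' i + c := by
  induction n, hkn using Nat.le_induction with
  | base =>
    simp only [Finset.sum_range_succ, add_assoc, hk,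
      Finset.sum_congr rfl fun i hi => hlt i (Finset.mem_range.1 hi)]
  | succ n hkn ih =>
    rw [Finset.sum_range_succ, ih, Finset.sum_range_succ _ n, hgt n hkn, add_right_comm]

theorem norm_sum_sub_mul_sub_le {α R : Type*} [Preorder α] [SeminormedRing R] {p q V W : ℝ}
    (hp : 0 < p) (hq : 0 < q) (hV : 0 ≤ V) (hW : 0 ≤ W) {m F : α → R}
    (hm : PVariationLE p m (V ^ p)) (hF : PVariationLE q F (W ^ q)) (n : ℕ) {ξ : ℕ → α}
    (hξ : StrictMono ξ) :
    ‖∑ k ∈ Finset.range (n + 1), (m (ξ k) - m (ξ 0)) * (F (ξ (k + 1)) - F (ξ k))‖ ≤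
      V * W * ∑ j ∈ Finset.range n, 1 / ((j : ℝ) + 1) ^ (1 / p + 1 / q) := by
  induction n generalizing ξ with
  | zero => simp
  | succ n ih =>
    obtain ⟨k, hk, hkey⟩ := Finset.exists_mul_le_div_card_rpow Finset.nonempty_range_add_one
      (fun _ _ => norm_nonneg _) (fun _ _ => norm_nonneg _) hp hq hV hW (hm (n + 1) ξ hξ)
      (hF (n + 1) (fun i => ξ (i + 1)) fun i j hij => hξ (Nat.succ_lt_succ hij))
    -- delete the point `ξ (k + 1)`, at which `‖Δm‖ * ‖ΔF‖` is smallest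
    set ξ' : ℕ → α := fun i => if i ≤ k then ξ i else ξ (i + 1)
    have hle : ∀ i ≤ k, ξ' i = ξ i := fun i hi => if_pos hi
    have hgt : ∀ i, k < i → ξ' i = ξ (i + 1) := fun i hi => if_neg (not_le.2 hi)
    have hξ'mono : StrictMono ξ' := strictMono_nat_of_lt_succ fun i => by
      simp only [ξ']; split_ifs <;> exact hξ (by omega)
    rw [Finset.sum_range_succ_eq_sum_add_of_merge (Finset.mem_range.1 hk)
      (u' := fun i => (m (ξ' i) - m (ξ' 0)) * (F (ξ' (i + 1)) - F (ξ' i)))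
      ((m (ξ (k + 1)) - m (ξ k)) * (F (ξ (k + 1 + 1)) - F (ξ (k + 1))))
      (fun i hi => by rw [hle i hi.le, hle (i + 1) hi, hle 0 k.zero_le])
      (by rw [hle k le_rfl, hgt (k + 1) k.lt_succ_self, hle 0 k.zero_le]; noncomm_ring)
      (fun i hi => by rw [hgt i hi, hgt (i + 1) (by omega), hle 0 k.zero_le]),
      Finset.sum_range_succ (fun j : ℕ => 1 / ((j : ℝ) + 1) ^ (1 / p + 1 / q)), mul_add]
    refine (norm_add_le _ _).trans (add_le_add (ih hξ'mono) ((norm_mul_le _ _).trans ?_))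
    simpa [div_eq_mul_inv] using hkey

theorem Finset.sum_csSup_image_le {ι α : Type*} (s : Finset ι) {A : ι → Set α}
    {φ : ι → α → ℝ} (hA : ∀ i, (A i).Nonempty) {c : ℝ}
    (h : ∀ v : ι → α, (∀ i, v i ∈ A i) → ∑ i ∈ s, φ i (v i) ≤ c) :
    ∑ i ∈ s, sSup (φ i '' A i) ≤ c := by
  refine le_of_forall_pos_le_add fun ε hε => ?_
  set ε' := ε / (s.card + 1)
  have hε' : 0 < ε' := by positivity
  have hnear : ∀ i, ∃ v ∈ A i, sSup (φ i '' A i) - ε' < φ i v := fun i => by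
    obtain ⟨_, ⟨v, hv, rfl⟩, hlt⟩ := exists_lt_of_lt_csSup ((hA i).image _) (sub_lt_self _ hε')
    exact ⟨v, hv, hlt⟩
  choose v hvA hv using hnear
  calc ∑ i ∈ s, sSup (φ i '' A i) ≤ ∑ i ∈ s, (φ i (v i) + ε') :=
        Finset.sum_le_sum fun i _ => by linarith [hv i]
    _ = ∑ i ∈ s, φ i (v i) + s.card * ε' := by
        rw [Finset.sum_add_distrib, Finset.sum_const, nsmul_eq_mul]
    _ ≤ c + ε := by
        gcongr
        · exact h v hvA
        · rw [mul_div_assoc', div_le_iff₀ (by positivity)]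
          nlinarith

section Oscillation

variable {E : Type*} [SeminormedAddCommGroup E] {p C : ℝ}

theorem PVariationLE.norm_sub_rpow_le {m : ℝ → E} (hm : PVariationLE p m C) {a b : ℝ}
    (hab : a < b) : ‖m b - m a‖ ^ p ≤ C := by
  have hη : StrictMono fun i : ℕ => a + i * (b - a) := fun i j hij => by
    have : (i : ℝ) < j := by exact_mod_cast hij
    nlinarith
  simpa using hm 1 _ hη

theorem PVariationLE.sum_norm_sub_rpow_le {α : Type*} [Preorder α] {m : α → E}
    (hm : PVariationLE p m C) {t v : ℕ → α} (htv : ∀ k, v k ∈ Ioo (t k) (t (k + 1))) (n : ℕ) :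
    ∑ k ∈ Finset.range n, ‖m (v k) - m (t k)‖ ^ p ≤ C := by
  set η : ℕ → α := fun j => if Even j then t (j / 2) else v (j / 2) with hη
  have hη_even : ∀ k, η (2 * k) = t k := fun k => by simp [hη]
  have hη_odd : ∀ k, η (2 * k + 1) = v k := fun k => by
    simp [hη, Nat.add_div_of_dvd_right (dvd_mul_right 2 k)]
  have hηmono : StrictMono η := strictMono_nat_of_lt_succ fun j => by
    obtain ⟨k, rfl | rfl⟩ := Nat.even_or_odd' j
    · rw [hη_even, hη_odd]; exact (htv k).1
    · rw [hη_odd, show 2 * k + 1 + 1 = 2 * (k + 1) by ring, hη_even]; exact (htv k).2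
  set u : ℕ → ℝ := fun j => ‖m (η (j + 1)) - m (η j)‖ ^ p
  have heven : ∀ n, ∑ k ∈ Finset.range n, u (2 * k) ≤ ∑ j ∈ Finset.range (2 * n), u j := by
    intro n
    induction n with
    | zero => simp
    | succ n ih =>
      rw [Finset.sum_range_succ, show 2 * (n + 1) = 2 * n + 1 + 1 by ring,
        Finset.sum_range_succ, Finset.sum_range_succ]
      linarith [rpow_nonneg (norm_nonneg (m (η (2 * n + 1 + 1)) - m (η (2 * n + 1)))) p]
  calc ∑ k ∈ Finset.range n, ‖m (v k) - m (t k)‖ ^ p = ∑ k ∈ Finset.range n, u (2 * k) := by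
        simp only [u, hη_odd, hη_even]
    _ ≤ C := (heven n).trans (hm _ η hηmono)

theorem PVariationLE.exists_norm_sub_le {m : ℝ → E} (hp : 0 < p) (hm : PVariationLE p m C)
    {t : ℕ → ℝ} (ht : StrictMono t) (n : ℕ) :
    ∃ c : ℕ → ℝ, (∀ k, ∀ v ∈ Ico (t k) (t (k + 1)), ‖m v - m (t k)‖ ≤ c k) ∧
      ∑ k ∈ Finset.range n, c k ^ p ≤ C := by
  set φ : ℕ → ℝ → ℝ := fun k v => ‖m v - m (t k)‖ ^ p
  have hne : ∀ k, (Ioo (t k) (t (k + 1))).Nonempty := fun k => nonempty_Ioo.2 (ht k.lt_succ_self)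
  have hbdd : ∀ k, BddAbove (φ k '' Ioo (t k) (t (k + 1))) := fun k =>
    ⟨C, forall_mem_image.2 fun v hv => hm.norm_sub_rpow_le hv.1⟩
  have hsup : ∀ k, 0 ≤ sSup (φ k '' Ioo (t k) (t (k + 1))) := fun k =>
    Real.sSup_nonneg (forall_mem_image.2 fun v _ => rpow_nonneg (norm_nonneg _) p)
  refine ⟨fun k => sSup (φ k '' Ioo (t k) (t (k + 1))) ^ (1 / p), fun k v hv => ?_, ?_⟩
  · rcases hv.1.eq_or_lt with rfl | hlt
    · simpa using rpow_nonneg (hsup k) _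
    · calc ‖m v - m (t k)‖ = φ k v ^ (1 / p) := by
            rw [← rpow_mul (norm_nonneg _), mul_one_div_cancel hp.ne', rpow_one]
        _ ≤ _ := rpow_le_rpow (rpow_nonneg (norm_nonneg _) p)
            (le_csSup (hbdd k) ⟨v, ⟨hlt, hv.2⟩, rfl⟩) (by positivity)
  · simp only [← rpow_mul (hsup _), one_div_mul_cancel hp.ne', rpow_one]
    exact Finset.sum_csSup_image_le _ hne fun v hv => hm.sum_norm_sub_rpow_le hv n

end Oscillation

theorem Real.sum_le_card_rpow_mul_of_sum_rpow_le {ι : Type*} (s : Finset ι) {f : ι → ℝ}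
    (hf : ∀ i ∈ s, 0 ≤ f i) {p V : ℝ} (hp : 1 ≤ p) (hV : 0 ≤ V) (h : ∑ i ∈ s, f i ^ p ≤ V ^ p) :
    ∑ i ∈ s, f i ≤ (s.card : ℝ) ^ (1 - 1 / p) * V := by
  have hp0 : 0 < p := by linarith
  refine (rpow_le_rpow_iff (Finset.sum_nonneg hf) (by positivity) hp0).1 ?_
  calc (∑ i ∈ s, f i) ^ p ≤ (s.card : ℝ) ^ (p - 1) * ∑ i ∈ s, f i ^ p :=
        Real.rpow_sum_le_const_mul_sum_rpow_of_nonneg s hp hf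
    _ ≤ (s.card : ℝ) ^ (p - 1) * V ^ p := by gcongr
    _ = ((s.card : ℝ) ^ (1 - 1 / p) * V) ^ p := by
        rw [mul_rpow (by positivity) hV, ← rpow_mul (by positivity), sub_mul,
          one_div_mul_cancel hp0.ne', one_mul]

theorem summable_one_div_nat_add_one_rpow {θ : ℝ} (hθ : 1 < θ) :
    Summable fun j : ℕ => 1 / ((j : ℝ) + 1) ^ θ := by
  simpa using (summable_nat_add_iff 1).2 (Real.summable_one_div_nat_rpow.2 hθ)

section RiemannStieltjes

theorem setIntegral_Ico_eq_sum {E : Type*} [NormedAddCommGroup E] [NormedSpace ℝ E] {h : ℝ → E}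
    (hh : Integrable h) {t : ℕ → ℝ} (ht : Monotone t) (n : ℕ) :
    ∫ v in Ico (t 0) (t n), h v = ∑ k ∈ Finset.range n, ∫ v in Ico (t k) (t (k + 1)), h v := by
  induction n with
  | zero => simp
  | succ n ih =>
    rw [Finset.sum_range_succ, ← ih, ← Ico_union_Ico_eq_Ico (ht n.zero_le) (ht n.le_succ),
      setIntegral_union Ico_disjoint_Ico_same measurableSet_Ico hh.integrableOn hh.integrableOn]

variable {m g : ℝ → ℂ} {M : ℝ}

theorem norm_integral_mul_sub_sum_le (hg : Integrable g) (hmg : Integrable fun v => m v * g v)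
    (hgM : ∀ v, ‖g v‖ ≤ M) {t : ℕ → ℝ} (ht : Monotone t) {n : ℕ}
    (hm0 : ∀ v ∉ Ico (t 0) (t n), m v = 0) {c : ℕ → ℝ}
    (hc : ∀ k, ∀ v ∈ Ico (t k) (t (k + 1)), ‖m v - m (t k)‖ ≤ c k) :
    ‖(∫ v, m v * g v) - ∑ k ∈ Finset.range n, m (t k) * ∫ v in Ico (t k) (t (k + 1)), g v‖ ≤
      M * ∑ k ∈ Finset.range n, c k * (t (k + 1) - t k) := by
  have hsplit : (∫ v, m v * g v) - ∑ k ∈ Finset.range n, m (t k) * ∫ v in Ico (t k) (t (k + 1)), g v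
      = ∑ k ∈ Finset.range n, ∫ v in Ico (t k) (t (k + 1)), (m v - m (t k)) * g v := by
    rw [← setIntegral_eq_integral_of_forall_compl_eq_zero
      fun v hv => by simp [hm0 v hv], setIntegral_Ico_eq_sum hmg ht, ← Finset.sum_sub_distrib]
    refine Finset.sum_congr rfl fun k _ => ?_
    rw [← integral_const_mul, ← integral_sub hmg.integrableOn (hg.integrableOn.const_mul _)]
    simp_rw [sub_mul]
  rw [hsplit, Finset.mul_sum]
  refine (norm_sum_le _ _).trans (Finset.sum_le_sum fun k _ => ?_)
  rcases le_or_gt (t (k + 1)) (t k) with hle | hlt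
  · simp [(ht k.le_succ).antisymm hle]
  have hbound : ∀ v ∈ Ico (t k) (t (k + 1)), ‖(m v - m (t k)) * g v‖ ≤ c k * M := fun v hv => by
    rw [norm_mul]
    exact mul_le_mul (hc k v hv) (hgM v) (norm_nonneg _) ((norm_nonneg _).trans (hc k v hv))
  calc _ ≤ c k * M * volume.real (Ico (t k) (t (k + 1))) :=
        norm_setIntegral_le_of_norm_le_const measure_Ico_lt_top hbound
    _ = M * (c k * (t (k + 1) - t k)) := by rw [Real.volume_real_Ico_of_le hlt.le]; ring

theorem norm_integral_mul_le_of_partition {p q V W : ℝ} (hp : 1 ≤ p) (hq : 0 < q) (hV : 0 ≤ V)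
    (hW : 0 ≤ W) (hg : Integrable g) (hgM : ∀ v, ‖g v‖ ≤ M) (hmg : Integrable fun v => m v * g v)
    (hmV : PVariationLE p m (V ^ p)) (hgW : PVariationLE q (fun u => ∫ v in Iio u, g v) (W ^ q))
    {a δ : ℝ} (hδ : 0 < δ) (n : ℕ) (hm0 : ∀ v ∉ Ioo a (a + (n + 1) * δ), m v = 0) :
    ‖∫ v, m v * g v‖ ≤ V * W * ∑ j ∈ Finset.range n, 1 / ((j : ℝ) + 1) ^ (1 / p + 1 / q) +
      M * (δ * ((n : ℝ) + 1) ^ (1 - 1 / p) * V) := by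
  set t : ℕ → ℝ := fun k => a + k * δ
  have ht : StrictMono t := fun i j hij => by
    simpa [t] using mul_lt_mul_of_pos_right (Nat.cast_lt.2 hij) hδ
  have hIco : Ico (t 0) (t (n + 1)) = Ico a (a + (n + 1) * δ) := by simp [t]
  have hma : m (t 0) = 0 := hm0 _ (by simp [t])
  obtain ⟨c, hc, hcV⟩ := hmV.exists_norm_sub_le (by linarith) ht (n + 1)
  have hc0 : ∀ k, 0 ≤ c k := fun k =>
    (norm_nonneg _).trans (hc k (t k) ⟨le_rfl, ht k.lt_succ_self⟩)
  have hRiemann : ∑ k ∈ Finset.range (n + 1), m (t k) * ∫ v in Ico (t k) (t (k + 1)), g v =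
      ∑ k ∈ Finset.range (n + 1), (m (t k) - m (t 0)) *
        ((∫ v in Iio (t (k + 1)), g v) - ∫ v in Iio (t k), g v) := by
    refine Finset.sum_congr rfl fun k _ => ?_
    rw [hma, sub_zero, intervalIntegral.integral_Iio_sub_Iio hg.integrableOn (ht k.lt_succ_self).le]
  have herr := norm_integral_mul_sub_sum_le hg hmg hgM ht.monotone
    (fun v hv => hm0 v fun hv' => hv (hIco ▸ Ioo_subset_Ico_self hv')) hc
  have hwidth : ∑ k ∈ Finset.range (n + 1), c k * (t (k + 1) - t k) =
      δ * ∑ k ∈ Finset.range (n + 1), c k := by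
    rw [Finset.mul_sum]
    exact Finset.sum_congr rfl fun k _ => by simp only [t]; push_cast; ring
  have hcsum := Real.sum_le_card_rpow_mul_of_sum_rpow_le _ (fun k _ => hc0 k) hp hV hcV
  rw [Finset.card_range, Nat.cast_add_one] at hcsum
  have hM : 0 ≤ M := (norm_nonneg _).trans (hgM 0)
  set S := ∑ k ∈ Finset.range (n + 1), m (t k) * ∫ v in Ico (t k) (t (k + 1)), g v
  calc ‖∫ v, m v * g v‖ ≤ ‖S‖ + ‖(∫ v, m v * g v) - S‖ := norm_le_norm_add_norm_sub' _ _
    _ ≤ _ := by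
      gcongr
      · rw [hRiemann]
        exact norm_sum_sub_mul_sub_le (by linarith) hq hV hW hmV hgW n ht
      · refine herr.trans ?_
        rw [hwidth, mul_assoc]
        gcongr

theorem norm_integral_mul_le {p q V W : ℝ} (hp : 1 ≤ p) (hq : 0 < q) (hpq : 1 < 1 / p + 1 / q)
    (hV : 0 ≤ V) (hW : 0 ≤ W) (hg : Integrable g) (hgM : ∀ v, ‖g v‖ ≤ M)
    (hmg : Integrable fun v => m v * g v) (hm : HasCompactSupport m)
    (hmV : PVariationLE p m (V ^ p)) (hgW : PVariationLE q (fun u => ∫ v in Iio u, g v) (W ^ q)) :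
    ‖∫ v, m v * g v‖ ≤ (∑' j : ℕ, 1 / ((j : ℝ) + 1) ^ (1 / p + 1 / q)) * V * W := by
  obtain ⟨R, hR, hRm⟩ := hm.exists_pos_le_norm
  set K := ∑' j : ℕ, 1 / ((j : ℝ) + 1) ^ (1 / p + 1 / q)
  have hbound : ∀ n : ℕ, ‖∫ v, m v * g v‖ ≤
      K * V * W + 2 * R * M * V * ((n : ℝ) + 1) ^ (-(1 / p)) := fun n => by
    have hn : (0 : ℝ) < n + 1 := by positivity
    refine (norm_integral_mul_le_of_partition hp hq hV hW hg hgM hmg hmV hgW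
      (a := -R) (δ := 2 * R / (n + 1)) (by positivity) n fun v hv => hRm v ?_).trans ?_
    · rw [mul_div_cancel₀ _ hn.ne', mem_Ioo, not_and_or, not_lt, not_lt] at hv
      rw [Real.norm_eq_abs, le_abs]
      rcases hv with hv | hv
      · right; linarith
      · left; linarith
    · refine add_le_add ?_ (le_of_eq ?_)
      · rw [mul_assoc K, mul_comm K]
        gcongr
        exact (summable_one_div_nat_add_one_rpow hpq).sum_le_tsum _ fun j _ => by positivity
      · rw [sub_eq_add_neg, rpow_add hn, rpow_one]
        field_simp
  have hlim : Tendsto (fun n : ℕ => K * V * W + 2 * R * M * V * ((n : ℝ) + 1) ^ (-(1 / p)))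
      atTop (nhds (K * V * W)) := by
    have h0 : Tendsto (fun n : ℕ => ((n : ℝ) + 1) ^ (-(1 / p))) atTop (nhds 0) :=
      (tendsto_rpow_neg_atTop (by positivity)).comp
        (tendsto_atTop_add_const_right _ 1 tendsto_natCast_atTop_atTop)
    simpa using (h0.const_mul (2 * R * M * V)).const_add (K * V * W)
  exact ge_of_tendsto' hlim hbound

end RiemannStieltjes

section Multiplier

theorem pVariationLE_of_variationNorm_le_one {r : ℝ} (hr : 0 < r) {m : ℝ → ℂ}
    (h : variationNorm r m ≤ 1) : PVariationLE r m 1 := by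
  intro N η hη
  have hsum : (∑ i : Fin N, (‖m (η i.succ) - m (η i.castSucc)‖₊ : ℝ≥0∞) ^ r) ^ (1 / r) ≤ 1 := by
    refine le_trans ?_ (le_add_self.trans h)
    exact le_iSup_of_le N <| le_iSup_of_le (fun i : Fin (N + 1) => η i) <|
      le_iSup_of_le (hη.comp Fin.val_strictMono) le_rfl
  rw [one_div, ENNReal.rpow_inv_le_iff hr, ENNReal.one_rpow] at hsum
  have hreal := ENNReal.toReal_mono ENNReal.one_ne_top hsum
  rw [ENNReal.toReal_sum fun i _ => by finiteness] at hreal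
  simpa [← Fin.sum_univ_eq_sum_range (fun i => ‖m (η (i + 1)) - m (η i)‖ ^ r),
    ← ENNReal.toReal_rpow] using hreal

noncomputable def inverseFourierIntegrand (f : ℝ → ℂ) (x : ℝ) : ℝ → ℂ :=
  fun ξ => 𝐞 (ξ * x) • 𝓕 f ξ

variable {f : ℝ → ℂ} {x : ℝ}

theorem applyMultiplier_eq_integral (m f : ℝ → ℂ) (x : ℝ) :
    applyMultiplier m f x = ∫ ξ, m ξ * inverseFourierIntegrand f x ξ := by
  simp [applyMultiplier, Real.fourierInv_eq, inverseFourierIntegrand, mul_smul_comm, mul_comm x]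

theorem applyMultiplier_indicator_one {I : Set ℝ} (hI : MeasurableSet I) (f : ℝ → ℂ) (x : ℝ) :
    applyMultiplier (I.indicator 1) f x = ∫ ξ in I, inverseFourierIntegrand f x ξ := by
  rw [applyMultiplier_eq_integral, ← integral_indicator hI]
  congr 1 with ξ
  by_cases hξ : ξ ∈ I <;> simp [hξ]

theorem integrable_inverseFourierIntegrand (hf : Integrable (𝓕 f)) :
    Integrable (inverseFourierIntegrand f x) := by
  refine ((Real.fourierIntegral_convergent_iff (-x)).2 hf).congr (ae_of_all _ fun ξ => ?_)
  simp [inverseFourierIntegrand, mul_comm]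

theorem norm_inverseFourierIntegrand_le (ξ : ℝ) :
    ‖inverseFourierIntegrand f x ξ‖ ≤ ∫ v, ‖f v‖ := by
  rw [inverseFourierIntegrand, Circle.norm_smul]
  exact VectorFourier.norm_fourierIntegral_le_integral_norm _ _ _ _ _

theorem sum_enorm_rpow_le_maximalSquareFunction (s : ℝ) (f : ℝ → ℂ) (x : ℝ) (N : ℕ) {η : ℕ → ℝ}
    (hη : StrictMono η) :
    (∑ i ∈ Finset.range N,
        ‖applyMultiplier ((Ico (η i) (η (i + 1))).indicator 1) f x‖ₑ ^ s) ^ (1 / s) ≤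
      maximalSquareFunction s f x := by
  classical
  set 𝓘 := (Finset.range N).image fun i => Ico (η i) (η (i + 1))
  have hdisj : ∀ i j, i < j → Disjoint (Ico (η i) (η (i + 1))) (Ico (η j) (η (j + 1))) :=
    fun i j hij => disjoint_left.2 fun v hvi hvj =>
      (hvi.2.trans_le ((hη.monotone hij).trans hvj.1)).false
  have hinj : Set.InjOn (fun i => Ico (η i) (η (i + 1))) (Finset.range N) := fun i _ j _ hij => by
    by_contra hne
    rcases lt_or_gt_of_ne hne with h | h
    · exact (hdisj i j h).ne (nonempty_Ico.2 (hη (i.lt_succ_self))).ne_empty hij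
    · exact (hdisj j i h).ne (nonempty_Ico.2 (hη (j.lt_succ_self))).ne_empty hij.symm
  have hord : ∀ I ∈ 𝓘, I.OrdConnected := by
    simp only [𝓘, Finset.mem_image]
    rintro _ ⟨i, -, rfl⟩
    exact ordConnected_Ico
  have hpair : ((𝓘 : Set (Set ℝ))).PairwiseDisjoint id := by
    simp only [𝓘, Finset.coe_image]
    rintro _ ⟨i, -, rfl⟩ _ ⟨j, -, rfl⟩ hne
    rcases lt_trichotomy i j with h | rfl | h
    · exact hdisj i j h
    · exact absurd rfl hne
    · exact (hdisj j i h).symm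
  rw [← Finset.sum_image (f := fun I => ‖applyMultiplier (I.indicator 1) f x‖ₑ ^ s) hinj]
  exact le_iSup_of_le 𝓘 <| le_iSup_of_le hord <| le_iSup_of_le hpair le_rfl

theorem pVariationLE_setIntegral_Iio_inverseFourierIntegrand {s : ℝ} (hs : 0 < s)
    (hf : Integrable (𝓕 f)) (hfin : maximalSquareFunction s f x ≠ ⊤) :
    PVariationLE s (fun u => ∫ ξ in Iio u, inverseFourierIntegrand f x ξ)
      ((maximalSquareFunction s f x).toReal ^ s) := by
  intro N η hη
  have hsum := sum_enorm_rpow_le_maximalSquareFunction s f x N hη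
  rw [one_div, ENNReal.rpow_inv_le_iff hs] at hsum
  have hreal := ENNReal.toReal_mono (ENNReal.rpow_ne_top_of_nonneg hs.le hfin) hsum
  rw [ENNReal.toReal_sum fun i _ => by finiteness, ← ENNReal.toReal_rpow] at hreal
  refine le_trans (le_of_eq (Finset.sum_congr rfl fun i _ => ?_)) hreal
  rw [intervalIntegral.integral_Iio_sub_Iio (integrable_inverseFourierIntegrand hf).integrableOn
    (hη i.lt_succ_self).le, ← applyMultiplier_indicator_one measurableSet_Ico,
    ← ENNReal.toReal_rpow, toReal_enorm]

end Multiplier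

theorem multiplier_pointwise_bound_general (r s : ℝ) (hr1 : 1 ≤ r) (hs : 2 < s) (hsr : r < s / (s - 1)) :
    ∃ C : ℝ≥0, 0 < C ∧ ∀ m : ℝ → ℂ, HasCompactSupport m → variationNorm r m ≤ 1 →
      ∀ f : SchwartzMap ℝ ℂ, ∀ x : ℝ,
        (‖applyMultiplier m (f : ℝ → ℂ) x‖₊ : ℝ≥0∞) ≤
          C * maximalSquareFunction s (f : ℝ → ℂ) x := by
  have hθ : 1 < 1 / r + 1 / s := by
    rw [lt_div_iff₀ (by linarith)] at hsr
    rw [div_add_div _ _ (by positivity) (by positivity), one_lt_div (by positivity)]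
    linarith
  set K := ∑' j : ℕ, 1 / ((j : ℝ) + 1) ^ (1 / r + 1 / s)
  have hK : 0 < K := (summable_one_div_nat_add_one_rpow hθ).tsum_pos (fun _ => by positivity) 0
    (by positivity)
  refine ⟨K.toNNReal, by simpa using hK, fun m hm hmV f x => ?_⟩
  by_cases htop : maximalSquareFunction s f x = ⊤
  · simp [htop, hK]
  by_cases hmg : Integrable fun ξ => m ξ * inverseFourierIntegrand f x ξ
  swap
  · simp [applyMultiplier_eq_integral, integral_undef hmg]
  have hfhat : Integrable (𝓕 (f : ℝ → ℂ)) := SchwartzMap.fourier_coe f ▸ (𝓕 f).integrable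
  have key := norm_integral_mul_le hr1 (by linarith) hθ zero_le_one ENNReal.toReal_nonneg
    (integrable_inverseFourierIntegrand hfhat) norm_inverseFourierIntegrand_le hmg hm
    (by simpa using pVariationLE_of_variationNorm_le_one (by linarith) hmV)
    (pVariationLE_setIntegral_Iio_inverseFourierIntegrand (by linarith) hfhat htop)
  rw [mul_one, ← applyMultiplier_eq_integral] at key
  rw [← enorm_eq_nnnorm, ← ofReal_norm, ← ENNReal.ofReal_toReal htop]
  exact (ENNReal.ofReal_le_ofReal key).trans_eq (ENNReal.ofReal_mul hK.le)

/-- **Pointwise domination of a `V^r`-multiplier by the `s`-square function.**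
Let `1 ≤ r < 2` and `2 < s < r′` (where `r′` is the Hölder conjugate of `r`;
the condition `s < r′` is stated in the equivalent form `r < s/(s−1) = s′`,
which is also correct when `r = 1`, i.e. `r′ = ∞`). There is a constant
`C = C(r,s)` such that for every compactly supported `m : ℝ → ℂ` with
`‖m‖_{V^r} ≤ 1`, every Schwartz `f : ℝ → ℂ`, and every `x ∈ ℝ`:
`|(m·f̂)ˇ(x)| ≤ C ⬝ sup_𝓘 (∑_{I ∈ 𝓘} |(1_I·f̂)ˇ(x)|^s)^{1/s}`. -/
theorem multiplier_pointwise_bound (r s : ℝ) (hr1 : 1 ≤ r) (hr2 : r < 2)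
    (hs : 2 < s) (hsr : r < s / (s - 1)) :
    ∃ C : ℝ≥0, 0 < C ∧ ∀ m : ℝ → ℂ, HasCompactSupport m → variationNorm r m ≤ 1 →
      ∀ f : SchwartzMap ℝ ℂ, ∀ x : ℝ,
        (‖applyMultiplier m (f : ℝ → ℂ) x‖₊ : ℝ≥0∞) ≤
          C * maximalSquareFunction s (f : ℝ → ℂ) x :=
  multiplier_pointwise_bound_general r s hr1 hs hsr
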